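/- Let α be a real number with α ∉ ℤ and a : ℕ → ℝ. Then a belongs to the β-dual of c₀(Δ^(α)) if and only if (1) for every k the series R_k a = ∑_{j=k}^∞ (−1)^{j−k} Γ(−α+1)/((j−k)!·Γ(−α−j+k+1)) a_j converges and ∑_{k=0}^∞ |R_k a| < ∞, and (2) sup_n ∑_{k=0}^{n} |w_{nk}| < ∞, where w_{nk} = ∑_{j=n}^∞ (−1)^{j−k} Γ(−α+1)/((j−k)!·Γ(−α−j+k+1)) a_j. Moreover, if a is in the β-dual then for every x ∈ c₀(Δ^(α)) one has ∑_{k=0}^∞ a_k x_k = ∑_{k=0}^∞ (R_k a)·(Δ^(α)x)_k. -/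

import Mathlib

open Filter Finset Topology

/-- The fractional difference matrix `Δ^(α)`. -/
noncomputable def fracDelta (α : ℝ) (n k : ℕ) : ℝ :=
  if k ≤ n then
    (-1 : ℝ) ^ (n - k) * Real.Gamma (α + 1) /
      ((Nat.factorial (n - k) : ℝ) * Real.Gamma (α - n + k + 1))
  else 0

/-- `(Δ^(α)x)_n = ∑_{k=0}^n Δ^(α)_{nk} x_k`. -/
noncomputable def fracDeltaSeq (α : ℝ) (x : ℕ → ℝ) (n : ℕ) : ℝ :=
  ∑ k ∈ Finset.range (n + 1), fracDelta α n k * x k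

/-- Membership in `c₀(Δ^(α))`. -/
def memC0Delta (α : ℝ) (x : ℕ → ℝ) : Prop :=
  Tendsto (fracDeltaSeq α x) atTop (nhds 0)

/-- Classical convergence of the series `∑_{j=0}^∞ f j` to `L`. -/
def SeriesHasSum (f : ℕ → ℝ) (L : ℝ) : Prop :=
  Tendsto (fun m => ∑ j ∈ Finset.range m, f j) atTop (nhds L)

/-! ### Auxiliary algebraic lemmas -/

theorem smeval_descP (r : ℝ) (n : ℕ) : (descPochhammer ℤ n).smeval r = ∏ i ∈ range n, (r - i) := by
  induction n with
  | zero => simp [Polynomial.smeval_one]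
  | succ n ih =>
    rw [descPochhammer_succ_right, prod_range_succ, ← ih]
    simp [Polynomial.smeval_mul, Polynomial.smeval_sub, Polynomial.smeval_X, Polynomial.smeval_natCast]

theorem ring_choose_real (r : ℝ) (m : ℕ) :
    Ring.choose r m = (∏ i ∈ range m, (r - i)) / m.factorial := by
  have h := Ring.descPochhammer_eq_factorial_smul_choose r m
  rw [smeval_descP, nsmul_eq_mul] at h
  have hf : ((m.factorial : ℝ)) ≠ 0 := by exact_mod_cast m.factorial_ne_zero
  rw [eq_div_iff hf, h, mul_comm]

theorem gamma_prod (β : ℝ) (hβ : ∀ m : ℤ, β ≠ (m : ℝ)) (m : ℕ) :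
    Real.Gamma (β + 1) = (∏ i ∈ range m, (β - i)) * Real.Gamma (β - m + 1) := by
  induction m with
  | zero => simp
  | succ m ih =>
    have h1 : β - m ≠ 0 := by
      intro h
      exact hβ m (by push_cast; linarith)
    have h2 : Real.Gamma (β - m + 1) = (β - m) * Real.Gamma (β - m) := Real.Gamma_add_one h1
    have h3 : β - ((m + 1 : ℕ) : ℝ) + 1 = β - m := by push_cast; ring
    rw [ih, h2, prod_range_succ, h3]
    ring

theorem fracDelta_zero (β : ℝ) {n k : ℕ} (h : ¬ k ≤ n) : fracDelta β n k = 0 := by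
  rw [fracDelta, if_neg h]

theorem fracDelta_eq (β : ℝ) (hβ : ∀ m : ℤ, β ≠ (m : ℝ)) {n k : ℕ} (h : k ≤ n) :
    fracDelta β n k = (-1 : ℝ) ^ (n - k) * Ring.choose β (n - k) := by
  set m := n - k with hm
  have hG : Real.Gamma (β - (m : ℝ) + 1) ≠ 0 := by
    apply Real.Gamma_ne_zero
    intro j hj
    exact hβ ((m : ℤ) - 1 - j) (by push_cast; linarith)
  have hcast : β - (n : ℝ) + k + 1 = β - (m : ℝ) + 1 := by rw [hm, Nat.cast_sub h]; ring
  have hf : ((m.factorial : ℝ)) ≠ 0 := by exact_mod_cast m.factorial_ne_zero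
  rw [fracDelta, if_pos h, ring_choose_real, ← hm, hcast, gamma_prod β hβ m]
  rw [show (-1 : ℝ) ^ m * ((∏ i ∈ range m, (β - i)) * Real.Gamma (β - (m : ℝ) + 1)) =
      ((-1 : ℝ) ^ m * ∏ i ∈ range m, (β - i)) * Real.Gamma (β - (m : ℝ) + 1) from by ring,
    mul_div_mul_right _ _ hG, mul_div_assoc]

theorem choose_conv (β : ℝ) (M : ℕ) :
    ∑ m ∈ range (M + 1), ((-1 : ℝ) ^ m * Ring.choose (-β) m) *
      ((-1 : ℝ) ^ (M - m) * Ring.choose β (M - m)) = if M = 0 then 1 else 0 := by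
  have h1 : ∀ m ∈ range (M + 1), ((-1 : ℝ) ^ m * Ring.choose (-β) m) *
      ((-1 : ℝ) ^ (M - m) * Ring.choose β (M - m))
      = (-1 : ℝ) ^ M * (Ring.choose (-β) m * Ring.choose β (M - m)) := by
    intro m hm
    rw [mem_range] at hm
    have hpow : (-1 : ℝ) ^ m * (-1 : ℝ) ^ (M - m) = (-1 : ℝ) ^ M := by
      rw [← pow_add, Nat.add_sub_cancel' (Nat.lt_succ_iff.mp hm)]
    rw [show ((-1 : ℝ) ^ m * Ring.choose (-β) m) * ((-1 : ℝ) ^ (M - m) * Ring.choose β (M - m))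
      = ((-1 : ℝ) ^ m * (-1 : ℝ) ^ (M - m)) * (Ring.choose (-β) m * Ring.choose β (M - m)) from by
        ring, hpow]
  rw [sum_congr rfl h1, ← mul_sum]
  have h2 : ∑ m ∈ range (M + 1), Ring.choose (-β) m * Ring.choose β (M - m)
      = Ring.choose ((-β) + β) M := by
    rw [Ring.add_choose_eq M (Commute.all _ _), Finset.Nat.sum_antidiagonal_eq_sum_range_succ_mk]
  rw [h2, neg_add_cancel]
  rcases Nat.eq_zero_or_pos M with h | h
  · subst h; simp [ring_choose_real]
  · rw [if_neg (Nat.pos_iff_ne_zero.mp h), ring_choose_real, Finset.prod_eq_zero (Finset.mem_range.mpr h)]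
    · simp
    · simp

theorem matmul (β : ℝ) (hβ : ∀ m : ℤ, β ≠ (m : ℝ)) (n i : ℕ) (h : i ≤ n) :
    ∑ j ∈ range (n + 1), fracDelta (-β) n j * fracDelta β j i = if n = i then 1 else 0 := by
  have hβ' : ∀ m : ℤ, (-β) ≠ (m : ℝ) := by
    intro m hm
    exact hβ (-m) (by push_cast; linarith)
  have hsub : Finset.Ico i (n + 1) ⊆ range (n + 1) := by
    intro j hj; rw [mem_range]; exact (Finset.mem_Ico.mp hj).2
  rw [← Finset.sum_subset hsub (by
    intro j hj hj2
    rw [mem_range] at hj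
    rw [Finset.mem_Ico, not_and_or] at hj2
    have : j < i := by
      rcases hj2 with h1 | h2
      · omega
      · omega
    rw [fracDelta_zero β (by omega), mul_zero])]
  rw [Finset.sum_Ico_eq_sum_range]
  have hM : n + 1 - i = (n - i) + 1 := by omega
  rw [hM]
  set M := n - i with hMdef
  have key : ∀ m ∈ range (M + 1),
      fracDelta (-β) n (i + m) * fracDelta β (i + m) i
      = ((-1 : ℝ) ^ m * Ring.choose β m) * ((-1 : ℝ) ^ (M - m) * Ring.choose (-β) (M - m)) := by
    intro m hm
    rw [mem_range, Nat.lt_succ_iff] at hm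
    have h1 : i + m ≤ n := by omega
    rw [fracDelta_eq (-β) hβ' h1, fracDelta_eq β hβ (Nat.le_add_right i m)]
    have e1 : n - (i + m) = M - m := by omega
    have e2 : i + m - i = m := by omega
    rw [e1, e2]
    ring
  rw [sum_congr rfl key]
  have hc := choose_conv (-β) M
  rw [neg_neg] at hc
  rw [hc]
  have : n = i ↔ M = 0 := by omega
  simp [this]

theorem matTri (A B : ℕ → ℕ → ℝ) (hB : ∀ n k, ¬ k ≤ n → B n k = 0)
    (h : ∀ n i, i ≤ n → ∑ j ∈ range (n + 1), A n j * B j i = if n = i then 1 else 0)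
    (y : ℕ → ℝ) (n : ℕ) :
    ∑ j ∈ range (n + 1), A n j * (∑ i ∈ range (j + 1), B j i * y i) = y n := by
  have step : ∀ j ∈ range (n + 1), A n j * (∑ i ∈ range (j + 1), B j i * y i)
      = ∑ i ∈ range (n + 1), A n j * (B j i * y i) := by
    intro j hj
    rw [mem_range, Nat.lt_succ_iff] at hj
    rw [mul_sum]
    apply Finset.sum_subset (by intro i hi; rw [mem_range] at *; omega)
    intro i hi hi2
    have hij : ¬ i ≤ j := by
      rw [mem_range] at hi2
      omega
    rw [hB j i hij]
    ring
  rw [sum_congr rfl step, Finset.sum_comm]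
  have step2 : ∀ i ∈ range (n + 1), ∑ j ∈ range (n + 1), A n j * (B j i * y i)
      = (if n = i then 1 else 0) * y i := by
    intro i hi
    rw [mem_range, Nat.lt_succ_iff] at hi
    rw [← h n i hi, sum_mul]
    apply sum_congr rfl
    intros
    ring
  rw [sum_congr rfl step2]
  simp only [ite_mul, one_mul, zero_mul]
  rw [Finset.sum_ite_eq (range (n + 1)) n (fun i => y i)]
  simp

/-! ### The `B` matrix of partial sums and its relation to the series in the statement -/

/-- `Bmat α a m j = ∑_{k=j}^{m-1} Δ^{(-α)}_{kj} a_k`. -/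
noncomputable def Bmat (α : ℝ) (a : ℕ → ℝ) (m j : ℕ) : ℝ :=
  ∑ k ∈ Finset.Ico j m, fracDelta (-α) k j * a k

theorem Bmat_zero (α : ℝ) (a : ℕ → ℝ) {m j : ℕ} (h : m ≤ j) : Bmat α a m j = 0 := by
  rw [Bmat, Finset.Ico_eq_empty (by omega), Finset.sum_empty]

theorem Bmat_partial (α : ℝ) (a : ℕ → ℝ) (k t : ℕ) :
    ∑ j ∈ range t, fracDelta (-α) (k + j) k * a (k + j) = Bmat α a (k + t) k := by
  rw [Bmat, Finset.sum_Ico_eq_sum_range]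
  have : k + t - k = t := by omega
  rw [this]

theorem seriesR_iff (α : ℝ) (a : ℕ → ℝ) (k : ℕ) (L : ℝ) :
    SeriesHasSum (fun j => fracDelta (-α) (k + j) k * a (k + j)) L ↔
      Tendsto (fun m => Bmat α a m k) atTop (nhds L) := by
  unfold SeriesHasSum
  have he : (fun t => ∑ j ∈ range t, fracDelta (-α) (k + j) k * a (k + j))
      = fun t => Bmat α a (t + k) k := by
    funext t
    rw [Bmat_partial, add_comm]
  rw [he]
  exact tendsto_add_atTop_iff_nat (f := fun m => Bmat α a m k) k

theorem Bmat_split (α : ℝ) (a : ℕ → ℝ) {n k : ℕ} (h : k ≤ n) (t : ℕ) :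
    ∑ j ∈ range t, fracDelta (-α) (n + j) k * a (n + j) = Bmat α a (n + t) k - Bmat α a n k := by
  have h1 : Bmat α a (n + t) k = Bmat α a n k + ∑ i ∈ Finset.Ico n (n + t), fracDelta (-α) i k * a i := by
    rw [Bmat, Bmat, ← Finset.sum_Ico_consecutive _ h (Nat.le_add_right n t)]
  rw [h1, Finset.sum_Ico_eq_sum_range]
  have : n + t - n = t := by omega
  rw [this]
  ring

theorem seriesW_iff (α : ℝ) (a : ℕ → ℝ) {n k : ℕ} (h : k ≤ n) (L : ℝ) :
    SeriesHasSum (fun j => fracDelta (-α) (n + j) k * a (n + j)) L ↔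
      Tendsto (fun m => Bmat α a m k - Bmat α a n k) atTop (nhds L) := by
  unfold SeriesHasSum
  have he : (fun t => ∑ j ∈ range t, fracDelta (-α) (n + j) k * a (n + j))
      = fun t => Bmat α a (t + n) k - Bmat α a n k := by
    funext t
    rw [Bmat_split α a h, add_comm]
  rw [he]
  exact tendsto_add_atTop_iff_nat (f := fun m => Bmat α a m k - Bmat α a n k) n

/-- The fundamental partial-sum exchange identity. -/
theorem psum (α : ℝ) (a : ℕ → ℝ) (y : ℕ → ℝ) (m : ℕ) :
    ∑ k ∈ range m, a k * (∑ j ∈ range (k + 1), fracDelta (-α) k j * y j)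
      = ∑ j ∈ range m, Bmat α a m j * y j := by
  have step : ∀ k ∈ range m, a k * (∑ j ∈ range (k + 1), fracDelta (-α) k j * y j)
      = ∑ j ∈ range m, a k * (fracDelta (-α) k j * y j) := by
    intro k hk
    rw [mem_range] at hk
    rw [mul_sum]
    apply Finset.sum_subset (by intro i hi; rw [mem_range] at *; omega)
    intro j hj hj2
    have : ¬ j ≤ k := by rw [mem_range] at hj2; omega
    rw [fracDelta_zero _ this]
    ring
  rw [sum_congr rfl step, Finset.sum_comm]
  apply sum_congr rfl
  intro j hj
  have hsub : Finset.Ico j m ⊆ range m := by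
    intro t ht; rw [mem_range]; exact (Finset.mem_Ico.mp ht).2
  have hzero : ∀ k ∈ range m, k ∉ Finset.Ico j m →
      fracDelta (-α) k j * a k * y j = 0 := by
    intro k hk hk2
    have hc : ¬ j ≤ k := by
      rw [mem_range] at hk
      rw [Finset.mem_Ico] at hk2
      omega
    rw [fracDelta_zero _ hc]
    ring
  rw [Bmat, Finset.sum_mul, Finset.sum_subset hsub hzero]
  apply sum_congr rfl
  intros
  ring

/-! ### Inversion lemmas -/

theorem recov (α : ℝ) (hα : ∀ m : ℤ, α ≠ (m : ℝ)) (x : ℕ → ℝ) (n : ℕ) :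
    ∑ j ∈ range (n + 1), fracDelta (-α) n j * fracDeltaSeq α x j = x n :=
  matTri (fracDelta (-α)) (fracDelta α) (fun _ _ h => fracDelta_zero α h) (matmul α hα) x n

theorem buildSeq (α : ℝ) (hα : ∀ m : ℤ, α ≠ (m : ℝ)) (y : ℕ → ℝ) (n : ℕ) :
    fracDeltaSeq α (fun n' => ∑ j ∈ range (n' + 1), fracDelta (-α) n' j * y j) n = y n := by
  have hα' : ∀ m : ℤ, (-α) ≠ (m : ℝ) := by
    intro m hm
    exact hα (-m) (by push_cast; linarith)
  have h := matmul (-α) hα'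
  rw [show (- - α) = α from neg_neg α] at h
  exact matTri (fracDelta α) (fracDelta (-α)) (fun _ _ h' => fracDelta_zero (-α) h') h y n

/-! ### Functional-analytic tools -/

noncomputable def seqC0 (y : ℕ → ℝ) (hy : Tendsto y atTop (nhds 0)) : ZeroAtInftyContinuousMap ℕ ℝ :=
  ⟨⟨y, continuous_of_discreteTopology⟩, cocompact_eq_atTop (α := ℕ) ▸ hy⟩

@[simp] lemma seqC0_apply (y : ℕ → ℝ) (hy) (j : ℕ) : seqC0 y hy j = y j := rfl

lemma C0_apply_le_norm (f : ZeroAtInftyContinuousMap ℕ ℝ) (j : ℕ) : |f j| ≤ ‖f‖ := by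
  rw [← ZeroAtInftyContinuousMap.norm_toBCF_eq_norm]
  exact (f.toBCF.norm_coe_le_norm j)

lemma C0_norm_le (f : ZeroAtInftyContinuousMap ℕ ℝ) {M : ℝ} (hM : 0 ≤ M) (h : ∀ j, |f j| ≤ M) :
    ‖f‖ ≤ M := by
  rw [← ZeroAtInftyContinuousMap.norm_toBCF_eq_norm]
  exact BoundedContinuousFunction.norm_le hM |>.mpr h

lemma C0_tendsto (f : ZeroAtInftyContinuousMap ℕ ℝ) : Tendsto (fun j => f j) atTop (nhds 0) := by
  have := f.zero_at_infty'
  rwa [cocompact_eq_atTop (α := ℕ)] at this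

noncomputable def rowCLM (c : ℕ → ℝ) (m : ℕ) : ZeroAtInftyContinuousMap ℕ ℝ →L[ℝ] ℝ :=
  LinearMap.mkContinuous
    { toFun := fun f => ∑ j ∈ Finset.range m, c j * f j
      map_add' := fun f g => by simp [mul_add, Finset.sum_add_distrib]
      map_smul' := fun r f => by simp [Finset.mul_sum]; ring_nf; simp [mul_comm, mul_assoc, mul_left_comm] }
    (∑ j ∈ Finset.range m, |c j|)
    (fun f => by
      simp only [LinearMap.coe_mk, AddHom.coe_mk]
      calc ‖∑ j ∈ Finset.range m, c j * f j‖ ≤ ∑ j ∈ Finset.range m, ‖c j * f j‖ :=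
            norm_sum_le _ _
        _ ≤ ∑ j ∈ Finset.range m, |c j| * ‖f‖ := by
            apply Finset.sum_le_sum
            intro j hj
            rw [Real.norm_eq_abs, abs_mul]
            exact mul_le_mul_of_nonneg_left (C0_apply_le_norm f j) (abs_nonneg _)
        _ = (∑ j ∈ Finset.range m, |c j|) * ‖f‖ := by rw [Finset.sum_mul])

@[simp] lemma rowCLM_apply (c : ℕ → ℝ) (m : ℕ) (f : ZeroAtInftyContinuousMap ℕ ℝ) :
    rowCLM c m f = ∑ j ∈ Finset.range m, c j * f j := rfl

lemma abs_row_le_norm (c : ℕ → ℝ) (m : ℕ) :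
    ∑ j ∈ Finset.range m, |c j| ≤ ‖rowCLM c m‖ := by
  have hs : Tendsto (fun j : ℕ => if j < m then (if 0 ≤ c j then (1:ℝ) else -1) else 0) atTop (nhds 0) := by
    apply tendsto_atTop_of_eventually_const (i₀ := m)
    intro j hj
    simp [Nat.not_lt.mpr hj]
  set s : ZeroAtInftyContinuousMap ℕ ℝ := seqC0 _ hs with hsdef
  have hnorm : ‖s‖ ≤ 1 := by
    apply C0_norm_le _ zero_le_one
    intro j
    simp only [hsdef, seqC0_apply]
    split_ifs <;> simp
  have happ : rowCLM c m s = ∑ j ∈ Finset.range m, |c j| := by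
    rw [rowCLM_apply]
    apply Finset.sum_congr rfl
    intro j hj
    rw [mem_range] at hj
    simp only [hsdef, seqC0_apply, if_pos hj]
    rcases le_or_gt 0 (c j) with h | h
    · rw [if_pos h, mul_one, abs_of_nonneg h]
    · rw [if_neg (not_le.mpr h), abs_of_neg h]; ring
  calc ∑ j ∈ Finset.range m, |c j| = rowCLM c m s := happ.symm
    _ ≤ ‖rowCLM c m s‖ := le_abs_self _
    _ ≤ ‖rowCLM c m‖ * ‖s‖ := (rowCLM c m).le_opNorm s
    _ ≤ ‖rowCLM c m‖ * 1 := mul_le_mul_of_nonneg_left hnorm (norm_nonneg (rowCLM c m))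
    _ = ‖rowCLM c m‖ := mul_one _

lemma toeplitz_null (V : ℕ → ℕ → ℝ) (C : ℝ) (hrow : ∀ m, ∑ j ∈ range m, |V m j| ≤ C)
    (hcol : ∀ j, Tendsto (fun m => V m j) atTop (nhds 0))
    (y : ℕ → ℝ) (hy : Tendsto y atTop (nhds 0)) :
    Tendsto (fun m => ∑ j ∈ range m, V m j * y j) atTop (nhds 0) := by
  have hC0 : 0 ≤ C := le_trans (by simp) (hrow 0)
  rw [NormedAddCommGroup.tendsto_nhds_zero]
  intro ε hε
  set δ := ε / (2 * (C + 1)) with hδdef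
  have hδ : 0 < δ := by positivity
  obtain ⟨N, hN⟩ := (Metric.tendsto_atTop.mp hy δ hδ)
  have h1 : Tendsto (fun m => ∑ j ∈ range N, V m j * y j) atTop (nhds 0) := by
    have := tendsto_finset_sum (range N) (fun j (_ : j ∈ range N) => (hcol j).mul_const (y j))
    simpa using this
  rw [NormedAddCommGroup.tendsto_nhds_zero] at h1
  obtain ⟨M, hM⟩ := (eventually_atTop.mp (h1 (ε/2) (by positivity)))
  rw [eventually_atTop]
  refine ⟨max N M, fun m hm => ?_⟩
  have hNm : N ≤ m := le_trans (le_max_left _ _) hm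
  have hsplit : ∑ j ∈ range m, V m j * y j
      = (∑ j ∈ range N, V m j * y j) + ∑ j ∈ Ico N m, V m j * y j := by
    rw [range_eq_Ico, ← Finset.sum_Ico_consecutive _ (Nat.zero_le N) hNm, ← range_eq_Ico]
  have h2 : ‖∑ j ∈ Ico N m, V m j * y j‖ ≤ δ * C := by
    calc ‖∑ j ∈ Ico N m, V m j * y j‖ ≤ ∑ j ∈ Ico N m, ‖V m j * y j‖ := norm_sum_le _ _
      _ ≤ ∑ j ∈ Ico N m, |V m j| * δ := by
          apply Finset.sum_le_sum
          intro j hj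
          rw [Real.norm_eq_abs, abs_mul]
          apply mul_le_mul_of_nonneg_left _ (abs_nonneg _)
          have := hN j (Finset.mem_Ico.mp hj).1
          rw [Real.dist_eq, sub_zero] at this
          exact this.le
      _ = (∑ j ∈ Ico N m, |V m j|) * δ := by rw [Finset.sum_mul]
      _ ≤ C * δ := by
          apply mul_le_mul_of_nonneg_right _ hδ.le
          refine le_trans ?_ (hrow m)
          rw [range_eq_Ico]
          exact Finset.sum_le_sum_of_subset_of_nonneg (Finset.Ico_subset_Ico (Nat.zero_le _) le_rfl)
            (fun j _ _ => abs_nonneg _)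
      _ = δ * C := mul_comm _ _
  have h3 : δ * C < ε / 2 := by
    rw [hδdef]
    rw [div_mul_eq_mul_div, div_lt_iff₀ (by positivity)]
    nlinarith
  calc ‖∑ j ∈ range m, V m j * y j‖
      ≤ ‖∑ j ∈ range N, V m j * y j‖ + ‖∑ j ∈ Ico N m, V m j * y j‖ := by
        rw [hsplit]; exact norm_add_le _ _
    _ < ε / 2 + ε / 2 :=
        add_lt_add_of_lt_of_le (hM m (le_trans (le_max_right _ _) hm)) (le_trans h2 h3.le)
    _ = ε := by ring

lemma conv_bounded {u : ℕ → ℝ} {L : ℝ} (h : Tendsto u atTop (nhds L)) :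
    ∃ C, ∀ m, |u m| ≤ C := by
  have hb : BddAbove (Set.range fun m => |u m|) := (h.abs).bddAbove_range
  obtain ⟨C, hC⟩ := hb
  exact ⟨C, fun m => hC (Set.mem_range_self m)⟩

/-! ### The key forward construction -/

section Forward

variable (α : ℝ) (a : ℕ → ℝ)

/-- Partial sums of `a·x` with `x` built from a null sequence `y`. -/
theorem psum_of_build (y : ℕ → ℝ) (m : ℕ) :
    ∑ k ∈ range m, a k * ((fun n' => ∑ j ∈ range (n' + 1), fracDelta (-α) n' j * y j) k)
      = ∑ j ∈ range m, Bmat α a m j * y j := psum α a y m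

theorem memC0_build (hα : ∀ m : ℤ, α ≠ (m : ℝ)) (y : ℕ → ℝ) (hy : Tendsto y atTop (nhds 0)) :
    memC0Delta α (fun n' => ∑ j ∈ range (n' + 1), fracDelta (-α) n' j * y j) := by
  unfold memC0Delta
  have : fracDeltaSeq α (fun n' => ∑ j ∈ range (n' + 1), fracDelta (-α) n' j * y j) = y :=
    funext (buildSeq α hα y)
  rw [this]
  exact hy

/-- From membership in the β-dual, the `B`-matrix has uniformly bounded rows. -/
theorem forward_rowbound (hα : ∀ m : ℤ, α ≠ (m : ℝ))
    (H : ∀ x : ℕ → ℝ, memC0Delta α x → ∃ L : ℝ, SeriesHasSum (fun k => a k * x k) L) :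
    ∃ C', 0 ≤ C' ∧ ∀ m, ∑ j ∈ range m, |Bmat α a m j| ≤ C' := by
  set g : ℕ → ZeroAtInftyContinuousMap ℕ ℝ →L[ℝ] ℝ := fun m => rowCLM (fun j => Bmat α a m j) m
    with hg
  have hpt : ∀ f : ZeroAtInftyContinuousMap ℕ ℝ, ∃ C, ∀ m, ‖g m f‖ ≤ C := by
    intro f
    have hy : Tendsto (fun j => f j) atTop (nhds 0) := C0_tendsto f
    obtain ⟨L, hL⟩ := H _ (memC0_build α hα (fun j => f j) hy)
    unfold SeriesHasSum at hL
    have he : (fun m => ∑ k ∈ range m, a k *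
        ((fun n' => ∑ j ∈ range (n' + 1), fracDelta (-α) n' j * f j) k)) = fun m => g m f := by
      funext m
      rw [psum_of_build α a (fun j => f j) m]
      simp [hg]
    rw [he] at hL
    obtain ⟨C, hC⟩ := conv_bounded hL
    exact ⟨C, fun m => hC m⟩
  obtain ⟨C', hC'⟩ := banach_steinhaus hpt
  refine ⟨max C' 0, le_max_right _ _, fun m => ?_⟩
  calc ∑ j ∈ range m, |Bmat α a m j| ≤ ‖g m‖ := abs_row_le_norm _ m
    _ ≤ C' := hC' m
    _ ≤ max C' 0 := le_max_left _ _

/-- From membership in the β-dual, each column of `B` converges. -/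
theorem forward_col (hα : ∀ m : ℤ, α ≠ (m : ℝ))
    (H : ∀ x : ℕ → ℝ, memC0Delta α x → ∃ L : ℝ, SeriesHasSum (fun k => a k * x k) L)
    (k : ℕ) : ∃ L, Tendsto (fun m => Bmat α a m k) atTop (nhds L) := by
  set y : ℕ → ℝ := fun j => if j = k then 1 else 0 with hy
  have hynull : Tendsto y atTop (nhds 0) := by
    apply tendsto_atTop_of_eventually_const (i₀ := k + 1)
    intro j hj
    have hne : j ≠ k := by omega
    simp [hy, hne]
  obtain ⟨L, hL⟩ := H _ (memC0_build α hα y hynull)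
  unfold SeriesHasSum at hL
  have he : (fun m => ∑ k' ∈ range m, a k' *
      ((fun n' => ∑ j ∈ range (n' + 1), fracDelta (-α) n' j * y j) k')) =
      fun m => Bmat α a m k := by
    funext m
    rw [psum_of_build α a y m]
    rcases lt_or_ge k m with h | h
    · rw [Finset.sum_eq_single k]
      · simp [hy]
      · intro j hj hjk
        simp [hy, hjk]
      · intro hk
        exact absurd (Finset.mem_range.mpr h) hk
    · rw [Bmat_zero α a h]
      apply Finset.sum_eq_zero
      intro j hj
      rw [mem_range] at hj
      have hne : j ≠ k := by omega
      simp [hy, hne]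
  rw [he] at hL
  exact ⟨L, hL⟩

end Forward

/-- Characterization of the β-dual of `c₀(Δ^(α))`:
`a ∈ (c₀(Δ^(α)))^β` iff the series `R_k a = ∑_{j≥k} (−1)^{j−k} Γ(−α+1)/((j−k)!Γ(−α−j+k+1)) a_j`
converge with `∑_k |R_k a| < ∞`, and `sup_n ∑_{k=0}^n |w_{nk}| < ∞` where
`w_{nk} = ∑_{j≥n} (−1)^{j−k} Γ(−α+1)/((j−k)!Γ(−α−j+k+1)) a_j`; moreover, in this case
`∑_k a_k x_k = ∑_k (R_k a)(Δ^(α)x)_k` for every `x ∈ c₀(Δ^(α))`. -/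
theorem betaDual_c0Delta (α : ℝ) (hα : ∀ m : ℤ, α ≠ (m : ℝ)) (a : ℕ → ℝ) :
    ((∀ x : ℕ → ℝ, memC0Delta α x → ∃ L : ℝ, SeriesHasSum (fun k => a k * x k) L) ↔
      (∃ R : ℕ → ℝ,
        (∀ k, SeriesHasSum (fun j => fracDelta (-α) (k + j) k * a (k + j)) (R k)) ∧
        (∃ C : ℝ, ∀ m, ∑ k ∈ Finset.range m, |R k| ≤ C)) ∧
      (∃ W : ℕ → ℕ → ℝ,
        (∀ n k, k ≤ n → SeriesHasSum (fun j => fracDelta (-α) (n + j) k * a (n + j)) (W n k)) ∧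
        (∃ C : ℝ, ∀ n, ∑ k ∈ Finset.range (n + 1), |W n k| ≤ C))) ∧
    ((∀ x : ℕ → ℝ, memC0Delta α x → ∃ L : ℝ, SeriesHasSum (fun k => a k * x k) L) →
      ∀ x : ℕ → ℝ, memC0Delta α x →
        ∀ R : ℕ → ℝ,
          (∀ k, SeriesHasSum (fun j => fracDelta (-α) (k + j) k * a (k + j)) (R k)) →
          ∀ L : ℝ, SeriesHasSum (fun k => a k * x k) L →
            SeriesHasSum (fun k => R k * fracDeltaSeq α x k) L) := by
  -- derived facts used in several places
  have habs_R_bound : ∀ (R : ℕ → ℝ), (∀ k, Tendsto (fun m => Bmat α a m k) atTop (nhds (R k))) →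
      ∀ C', (∀ m, ∑ j ∈ range m, |Bmat α a m j| ≤ C') →
      ∀ m, ∑ k ∈ range m, |R k| ≤ C' := by
    intro R hRt C' hC' m
    have hlim : Tendsto (fun t => ∑ k ∈ range m, |Bmat α a t k|) atTop
        (nhds (∑ k ∈ range m, |R k|)) :=
      tendsto_finset_sum (range m) (fun k _ => (hRt k).abs)
    apply le_of_tendsto hlim
    rw [eventually_atTop]
    refine ⟨m, fun t ht => ?_⟩
    calc ∑ k ∈ range m, |Bmat α a t k| ≤ ∑ k ∈ range t, |Bmat α a t k| :=
          Finset.sum_le_sum_of_subset_of_nonneg (Finset.range_subset_range.mpr ht)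
            (fun _ _ _ => abs_nonneg _)
      _ ≤ C' := hC' t
  -- the central convergence computation
  have central : ∀ (R : ℕ → ℝ), (∀ k, Tendsto (fun m => Bmat α a m k) atTop (nhds (R k))) →
      ∀ C2 : ℝ, (∀ m, ∑ j ∈ range m, |Bmat α a m j - R j| ≤ C2) →
      ∀ x : ℕ → ℝ, memC0Delta α x →
      Tendsto (fun m => (∑ k ∈ range m, a k * x k) - ∑ j ∈ range m, R j * fracDeltaSeq α x j)
        atTop (nhds 0) := by
    intro R hRt C2 hC2 x hx
    set y : ℕ → ℝ := fracDeltaSeq α x with hy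
    have hxy : ∀ n, x n = ∑ j ∈ range (n + 1), fracDelta (-α) n j * y j :=
      fun n => (recov α hα x n).symm
    have hT : ∀ m, ∑ k ∈ range m, a k * x k = ∑ j ∈ range m, Bmat α a m j * y j := by
      intro m
      rw [show (fun k => a k * x k) = fun k => a k * ∑ j ∈ range (k + 1), fracDelta (-α) k j * y j
        from funext fun k => by rw [← hxy k]]
      exact psum α a y m
    have key : Tendsto (fun m => ∑ j ∈ range m, (Bmat α a m j - R j) * y j) atTop (nhds 0) := by
      apply toeplitz_null _ C2 hC2 _ _ hx
      intro j
      have := (hRt j).sub_const (R j)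
      rwa [sub_self] at this
    have he : (fun m => (∑ k ∈ range m, a k * x k) - ∑ j ∈ range m, R j * y j)
        = fun m => ∑ j ∈ range m, (Bmat α a m j - R j) * y j := by
      funext m
      rw [hT m, ← Finset.sum_sub_distrib]
      apply sum_congr rfl
      intros
      ring
    rw [he]
    exact key
  constructor
  · constructor
    · -- forward direction
      intro H
      obtain ⟨C', hC'0, hC'⟩ := forward_rowbound α a hα H
      choose R hRt using forward_col α a hα H
      have hRbd := habs_R_bound R hRt C' hC'
      refine ⟨⟨R, fun k => (seriesR_iff α a k (R k)).mpr (hRt k), ⟨C', hRbd⟩⟩,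
        ⟨fun n k => R k - Bmat α a n k, ?_, ⟨C' + C', ?_⟩⟩⟩
      · intro n k hkn
        rw [seriesW_iff α a hkn]
        exact (hRt k).sub_const (Bmat α a n k)
      · intro n
        have h1 : ∑ k ∈ Finset.range (n + 1), |R k - Bmat α a n k|
            ≤ (∑ k ∈ Finset.range (n + 1), |R k|) + ∑ k ∈ Finset.range (n + 1), |Bmat α a n k| := by
          rw [← Finset.sum_add_distrib]
          exact Finset.sum_le_sum fun k _ => abs_sub _ _
        have h2 : ∑ k ∈ Finset.range (n + 1), |Bmat α a n k| ≤ C' := by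
          rw [Finset.sum_range_succ, Bmat_zero α a le_rfl]
          simpa using hC' n
        exact le_trans h1 (add_le_add (hRbd (n + 1)) h2)
    · -- backward direction
      rintro ⟨⟨R, hRs, ⟨CR, hCR⟩⟩, ⟨W, hWs, ⟨CW, hCW⟩⟩⟩
      intro x hx
      have hRt : ∀ k, Tendsto (fun m => Bmat α a m k) atTop (nhds (R k)) :=
        fun k => (seriesR_iff α a k (R k)).mp (hRs k)
      have hWeq : ∀ n k, k ≤ n → W n k = R k - Bmat α a n k := by
        intro n k hkn
        have h1 := (seriesW_iff α a hkn (W n k)).mp (hWs n k hkn)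
        have h2 : Tendsto (fun m => Bmat α a m k - Bmat α a n k) atTop (nhds (R k - Bmat α a n k)) :=
          (hRt k).sub_const (Bmat α a n k)
        exact tendsto_nhds_unique h1 h2
      have hC2 : ∀ m, ∑ j ∈ range m, |Bmat α a m j - R j| ≤ CW := by
        intro m
        have : ∀ j ∈ range m, |Bmat α a m j - R j| = |W m j| := by
          intro j hj
          rw [mem_range] at hj
          rw [hWeq m j (by omega), abs_sub_comm]
        rw [sum_congr rfl this]
        calc ∑ j ∈ range m, |W m j| ≤ ∑ j ∈ range (m + 1), |W m j| := by
              rw [Finset.sum_range_succ]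
              have := abs_nonneg (W m m)
              linarith
          _ ≤ CW := hCW m
      have hcen := central R hRt CW hC2 x hx
      -- the series ∑ R j y j converges
      have hRabs : Summable fun k => |R k| :=
        summable_of_sum_range_le (fun _ => abs_nonneg _) hCR
      obtain ⟨Y, hY⟩ := conv_bounded hx
      have hY0 : 0 ≤ Y := le_trans (abs_nonneg _) (hY 0)
      have hsum : Summable fun k => R k * fracDeltaSeq α x k := by
        apply Summable.of_norm_bounded (g := fun k => |R k| * Y) (hRabs.mul_right Y)
        intro k
        rw [Real.norm_eq_abs, abs_mul]
        exact mul_le_mul_of_nonneg_left (hY k) (abs_nonneg _)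
      have hPt : Tendsto (fun m => ∑ j ∈ range m, R j * fracDeltaSeq α x j) atTop
          (nhds (∑' j, R j * fracDeltaSeq α x j)) := hsum.hasSum.tendsto_sum_nat
      refine ⟨∑' j, R j * fracDeltaSeq α x j, ?_⟩
      unfold SeriesHasSum
      have hfin := hcen.add hPt
      rw [zero_add] at hfin
      have heq : (fun m => ((∑ k ∈ range m, a k * x k) -
          ∑ j ∈ range m, R j * fracDeltaSeq α x j)
          + ∑ j ∈ range m, R j * fracDeltaSeq α x j)
          = fun m => ∑ k ∈ range m, a k * x k := by
        funext m; ring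
      rw [heq] at hfin
      exact hfin
  · -- moreover
    intro H x hx R hRs L hL
    obtain ⟨C', hC'0, hC'⟩ := forward_rowbound α a hα H
    choose R₀ hR₀t using forward_col α a hα H
    have hReq : R = R₀ := by
      funext k
      exact tendsto_nhds_unique ((seriesR_iff α a k (R k)).mp (hRs k)) (hR₀t k)
    subst hReq
    have hRbd := habs_R_bound R hR₀t C' hC'
    have hC2 : ∀ m, ∑ j ∈ range m, |Bmat α a m j - R j| ≤ C' + C' := by
      intro m
      have h1 : ∑ j ∈ range m, |Bmat α a m j - R j|
          ≤ (∑ j ∈ range m, |Bmat α a m j|) + ∑ j ∈ range m, |R j| := by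
        rw [← Finset.sum_add_distrib]
        exact Finset.sum_le_sum fun j _ => abs_sub _ _
      exact le_trans h1 (add_le_add (hC' m) (hRbd m))
    have hcen := central R hR₀t (C' + C') hC2 x hx
    unfold SeriesHasSum at hL ⊢
    have hfin := hL.sub hcen
    rw [sub_zero] at hfin
    have heq : (fun m => (∑ k ∈ range m, a k * x k) -
        ((∑ k ∈ range m, a k * x k) - ∑ j ∈ range m, R j * fracDeltaSeq α x j))
        = fun m => ∑ j ∈ range m, R j * fracDeltaSeq α x j := by
      funext m; ring
    rw [heq] at hfin
    exact hfin
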